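/- arXiv:2409.07797 — 7 statements merged into one kernel-verified Lean document; each statement's English description precedes it below -/
import Mathlib

section
/- Every quaternion matrix admits a quaternion singular value decomposition: for every m×n quaternion matrix A there exist a unitary m×m quaternion matrix U, a unitary n×n quaternion matrix V, and real numbers σ₁ ≥ σ₂ ≥ … ≥ σ_M ≥ 0 with M = min(m,n), such that A = U * D(σ) * Vᴴ. -/
/-!
Choose a unit vector `v` maximizing `‖A v‖` on the (compact) unit sphere and write
`A v = s u` with `‖u‖ = 1`. Householder reflections, corrected by a unit quaternion scalar
because `ℍ` is not commutative, extend `u` and `v` to unitary matrices `U` and `V`. Then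
`Uᴴ A V` has first column `s e₀`, and maximality of `s` forces the rest of its first row to
vanish, so `A = U diag(s, B') Vᴴ`. Induct on `B'`: since `‖B' x‖ ≤ s ‖x‖`, every singular value
of `B'` is at most `s`, which keeps the singular values decreasing.
-/

open Matrix BigOperators Filter

noncomputable section

abbrev Quat := Quaternion ℝ

def IsQUnitary {k : ℕ} (U : Matrix (Fin k) (Fin k) Quat) : Prop :=
  Uᴴ * U = 1 ∧ U * Uᴴ = 1

def Dmat {m n : ℕ} (s : Fin (min m n) → ℝ) : Matrix (Fin m) (Fin n) Quat :=
  fun i j =>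
    if h : (i : ℕ) = (j : ℕ) then
      ((s ⟨(i : ℕ), by have h1 := i.isLt; have h2 := j.isLt; omega⟩ : ℝ) : Quat)
    else 0

def frob {m n : ℕ} (A : Matrix (Fin m) (Fin n) Quat) : ℝ :=
  Real.sqrt (∑ i, ∑ j, ‖A i j‖ ^ 2)

def Sshrink {M : ℕ} (lam alph : ℝ) (σ : Fin M → ℝ) : Fin M → ℝ :=
  let z : Fin M → ℝ := fun i => if lam < σ i then σ i - lam / 2 else 0
  let nz : ℝ := Real.sqrt (∑ i, z i ^ 2)
  if nz = 0 then fun _ => 0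
  else
    let K : ℝ := 1 + alph * lam / (2 * nz)
    fun i =>
      if K * lam / (2 * (K - 1)) < σ i then σ i
      else if lam < σ i then K * (σ i - lam / 2)
      else 0

open Classical in
def softQ (t : ℝ) (q : Quat) : Quat :=
  if q = 0 then 0 else (max (‖q‖ - t) 0 / ‖q‖) • q

def qinner {m n : ℕ} (P Q : Matrix (Fin m) (Fin n) Quat) : ℝ :=
  ∑ i, ∑ j, (star (P i j) * Q i j).re

instance : StarModule ℝ Quat := ⟨fun r a => by rw [Quaternion.star_smul, star_trivial r]⟩

namespace QSVD

local notation "‖" x "‖₂" => ‖WithLp.toLp 2 x‖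

section Vectors

variable {ι : Type*} [Fintype ι]

lemma star_dotProduct_self (x : ι → Quat) : star x ⬝ᵥ x = ((‖x‖₂ ^ 2 : ℝ) : Quat) := by
  simp only [dotProduct, Pi.star_apply, Quaternion.star_mul_self,
    Quaternion.normSq_eq_norm_mul_self, PiLp.norm_sq_eq_of_L2, ← sq]
  exact (map_sum (algebraMap ℝ Quat) _ _).symm

lemma dotProduct_star_self (x : ι → Quat) : x ⬝ᵥ star x = ((‖x‖₂ ^ 2 : ℝ) : Quat) := by
  simp only [dotProduct, Pi.star_apply, Quaternion.self_mul_star,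
    Quaternion.normSq_eq_norm_mul_self, PiLp.norm_sq_eq_of_L2, ← sq]
  exact (map_sum (algebraMap ℝ Quat) _ _).symm

lemma norm_mulVec_of_conjTranspose_mul_self [DecidableEq ι] {κ : Type*} [Fintype κ]
    {U : Matrix κ ι Quat} (hU : Uᴴ * U = 1) (x : ι → Quat) : ‖U *ᵥ x‖₂ = ‖x‖₂ := by
  have h : ((‖U *ᵥ x‖₂ ^ 2 : ℝ) : Quat) = ((‖x‖₂ ^ 2 : ℝ) : Quat) := by
    rw [← star_dotProduct_self, ← star_dotProduct_self, star_mulVec, ← dotProduct_mulVec,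
      mulVec_mulVec, hU, one_mulVec]
  exact (pow_left_inj₀ (norm_nonneg _) (norm_nonneg _) two_ne_zero).mp
    (Quaternion.coe_injective h)

lemma norm_star_vec (x : ι → Quat) : ‖star x‖₂ = ‖x‖₂ := by
  simp only [PiLp.norm_eq_of_L2, Pi.star_apply, norm_star]

lemma sq_norm_cons {n : ℕ} (a : Quat) (y : Fin n → Quat) :
    ‖(Fin.cons a y : Fin (n + 1) → Quat)‖₂ ^ 2 = ‖a‖ ^ 2 + ‖y‖₂ ^ 2 := by
  simp only [PiLp.norm_sq_eq_of_L2, Fin.sum_univ_succ, Fin.cons_zero, Fin.cons_succ]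

lemma norm_cons_zero {n : ℕ} (y : Fin n → Quat) :
    ‖(Fin.cons 0 y : Fin (n + 1) → Quat)‖₂ = ‖y‖₂ := by
  have h := sq_norm_cons 0 y
  rw [norm_zero, zero_pow two_ne_zero, zero_add] at h
  exact (pow_left_inj₀ (norm_nonneg _) (norm_nonneg _) two_ne_zero).mp h

lemma cons_zero_eq_single {α : Type*} [Zero α] {n : ℕ} (a : α) :
    (Fin.cons a 0 : Fin (n + 1) → α) = Pi.single 0 a := by
  funext i
  cases i using Fin.cases <;> simp

lemma exists_unit_smul_eq {n : ℕ} (y : Fin (n + 1) → Quat) :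
    ∃ u : Fin (n + 1) → Quat, ‖u‖₂ = 1 ∧ y = ‖y‖₂ • u := by
  by_cases hy : ‖y‖₂ = 0
  · refine ⟨Pi.single 0 1, by simp, ?_⟩
    rw [hy, zero_smul]
    simpa using hy
  · exact ⟨‖y‖₂⁻¹ • y, by simp [norm_smul, hy], by rw [smul_smul, mul_inv_cancel₀ hy, one_smul]⟩

end Vectors

section Householder

variable {ι : Type*} [Fintype ι] [DecidableEq ι]

lemma star_mul_self_eq_one {p : Quat} (hp : ‖p‖ = 1) : star p * p = 1 := by
  rw [Quaternion.star_mul_self, Quaternion.normSq_eq_norm_mul_self, hp, mul_one,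
    Quaternion.coe_one]

lemma self_mul_star_eq_one {p : Quat} (hp : ‖p‖ = 1) : p * star p = 1 := by
  rw [Quaternion.self_mul_star, Quaternion.normSq_eq_norm_mul_self, hp, mul_one,
    Quaternion.coe_one]

lemma diagonal_const_mem_unitary {p : Quat} (hp : ‖p‖ = 1) :
    diagonal (fun _ : ι => p) ∈ unitary (Matrix ι ι Quat) := by
  rw [Unitary.mem_iff, star_eq_conjTranspose, diagonal_conjTranspose, diagonal_mul_diagonal,
    diagonal_mul_diagonal]
  simp only [Pi.star_apply, star_mul_self_eq_one hp, self_mul_star_eq_one hp, diagonal_one,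
    and_self]

def householder (w : ι → Quat) : Matrix ι ι Quat :=
  1 - (2 / ‖w‖₂ ^ 2 : ℝ) • vecMulVec w (star w)

lemma householder_mem_unitary (w : ι → Quat) :
    householder w ∈ unitary (Matrix ι ι Quat) := by
  set c : ℝ := 2 / ‖w‖₂ ^ 2 with hc
  set P := vecMulVec w (star w)
  have hP : star P = P := by rw [star_eq_conjTranspose, conjTranspose_vecMulVec, star_star]
  have hPP : P * P = ‖w‖₂ ^ 2 • P := by
    rw [vecMulVec_mul_vecMulVec, star_dotProduct_self, ← vecMulVec_smul]
    congr 1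
    funext i
    exact Quaternion.coe_mul_eq_smul _ _
  have hc2 : c * c * ‖w‖₂ ^ 2 = 2 * c := by
    rcases eq_or_ne (‖w‖₂ ^ 2) 0 with h | h
    · simp [hc, h]
    · rw [hc]; field_simp
  have hstar : star (householder w) = householder w := by
    rw [householder, star_sub, star_one, star_smul, hP, star_trivial]
  have hsq : householder w * householder w = 1 := by
    rw [householder, sub_mul, mul_sub, mul_sub, one_mul, mul_one, one_mul, smul_mul_smul,
      hPP, smul_smul, hc2]
    module
  exact ⟨by rw [hstar, hsq], by rw [hstar, hsq]⟩

lemma householder_mulVec (w v : ι → Quat) :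
    householder w *ᵥ v = v - (2 / ‖w‖₂ ^ 2 : ℝ) • (MulOpposite.op (star w ⬝ᵥ v) • w) := by
  rw [householder, sub_mulVec, one_mulVec, smul_mulVec, vecMulVec_mulVec]

lemma householder_mulVec_self (w : ι → Quat) : householder w *ᵥ w = -w := by
  rcases eq_or_ne w 0 with rfl | hw
  · simp
  have hN : ‖w‖₂ ^ 2 ≠ 0 := by simpa using hw
  have hop : MulOpposite.op (((‖w‖₂ ^ 2 : ℝ) : Quat)) • w = ‖w‖₂ ^ 2 • w := by
    funext i
    exact (Quaternion.coe_commutes _ _).symm.trans (Quaternion.coe_mul_eq_smul _ _)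
  rw [householder_mulVec, star_dotProduct_self, hop, smul_smul, div_mul_cancel₀ _ hN]
  module

lemma householder_mulVec_of_star_dotProduct_eq_zero {w v : ι → Quat} (h : star w ⬝ᵥ v = 0) :
    householder w *ᵥ v = v := by
  rw [householder_mulVec, h, MulOpposite.op_zero, zero_smul, smul_zero, sub_zero]

lemma householder_sub_mulVec {x y : ι → Quat} (hxy : ‖x‖₂ = ‖y‖₂)
    (hself : star x ⬝ᵥ y = star y ⬝ᵥ x) : householder (y - x) *ᵥ x = y := by
  have horth : star (y - x) ⬝ᵥ (x + y) = 0 := by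
    have hsq : star y ⬝ᵥ y = star x ⬝ᵥ x := by rw [star_dotProduct_self, star_dotProduct_self, hxy]
    rw [star_sub, sub_dotProduct, dotProduct_add, dotProduct_add, hsq, hself]
    abel
  calc householder (y - x) *ᵥ x
      = householder (y - x) *ᵥ ((1 / 2 : ℝ) • (x + y) - (1 / 2 : ℝ) • (y - x)) := by
        congr 1; module
    _ = (1 / 2 : ℝ) • (x + y) + (1 / 2 : ℝ) • (y - x) := by
        rw [mulVec_sub, mulVec_smul, mulVec_smul, householder_mulVec_self,
          householder_mulVec_of_star_dotProduct_eq_zero horth]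
        module
    _ = y := by module

end Householder

lemma isQUnitary_iff_mem_unitary {k : ℕ} {U : Matrix (Fin k) (Fin k) Quat} :
    IsQUnitary U ↔ U ∈ unitary (Matrix (Fin k) (Fin k) Quat) :=
  Iff.rfl

lemma exists_norm_eq_one_star_mul_comm (q : Quat) :
    ∃ p : Quat, ‖p‖ = 1 ∧ star p * q = star q * p := by
  rcases eq_or_ne q 0 with rfl | hq
  · exact ⟨1, norm_one, by simp⟩
  · refine ⟨‖q‖⁻¹ • q, by simp [norm_smul, hq], ?_⟩
    rw [Quaternion.star_smul, smul_mul_assoc, mul_smul_comm]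

lemma exists_isQUnitary_mulVec_single {n : ℕ} {v : Fin (n + 1) → Quat} (hv : ‖v‖₂ = 1) :
    ∃ U : Matrix (Fin (n + 1)) (Fin (n + 1)) Quat, IsQUnitary U ∧ U *ᵥ Pi.single 0 1 = v := by
  -- `p` makes `star (Pi.single 0 p) ⬝ᵥ v` real, so a reflection sends `Pi.single 0 p` to `v`
  obtain ⟨p, hp, hpv⟩ := exists_norm_eq_one_star_mul_comm (v 0)
  have hx : diagonal (fun _ : Fin (n + 1) => p) *ᵥ Pi.single 0 1 = Pi.single 0 p := by
    rw [mulVec_single_one]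
    funext i
    rcases eq_or_ne i 0 with rfl | hi <;> simp [*]
  refine ⟨householder (v - Pi.single 0 p) * diagonal (fun _ : Fin (n + 1) => p),
    Submonoid.mul_mem _ (householder_mem_unitary _) (diagonal_const_mem_unitary hp), ?_⟩
  rw [← mulVec_mulVec, hx]
  apply householder_sub_mulVec
  · simp [hv, hp]
  · rw [Pi.star_single, single_dotProduct, dotProduct_single, hpv, Pi.star_apply]

section DiagCons

variable {α : Type*} {m n : ℕ}

def diagCons [Zero α] (a : α) (W : Matrix (Fin m) (Fin n) α) :
    Matrix (Fin (m + 1)) (Fin (n + 1)) α :=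
  Matrix.of fun i j => Fin.cases (Fin.cases a (fun _ => 0) j) (fun i' => Fin.cases 0 (W i') j) i

section Zero

variable [Zero α] (a : α) (W : Matrix (Fin m) (Fin n) α)

@[simp] lemma diagCons_zero_zero : diagCons a W 0 0 = a := rfl

@[simp] lemma diagCons_zero_succ (j : Fin n) : diagCons a W 0 j.succ = 0 := rfl

@[simp] lemma diagCons_succ_zero (i : Fin m) : diagCons a W i.succ 0 = 0 := rfl

@[simp] lemma diagCons_succ_succ (i : Fin m) (j : Fin n) : diagCons a W i.succ j.succ = W i j :=
  rfl

lemma eq_diagCons (B : Matrix (Fin (m + 1)) (Fin (n + 1)) α)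
    (hcol : ∀ i : Fin m, B i.succ 0 = 0) (hrow : ∀ j : Fin n, B 0 j.succ = 0) :
    B = diagCons (B 0 0) (B.submatrix Fin.succ Fin.succ) := by
  ext i j
  cases i using Fin.cases <;> cases j using Fin.cases <;> simp [hcol, hrow]

end Zero

lemma diagCons_mul [NonUnitalNonAssocSemiring α] {k : ℕ} (a b : α) (W : Matrix (Fin m) (Fin n) α)
    (X : Matrix (Fin n) (Fin k) α) : diagCons a W * diagCons b X = diagCons (a * b) (W * X) := by
  ext i j
  cases i using Fin.cases <;> cases j using Fin.cases <;> simp [mul_apply, Fin.sum_univ_succ]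

lemma diagCons_mulVec_cons [NonUnitalNonAssocSemiring α] (a b : α) (W : Matrix (Fin m) (Fin n) α)
    (y : Fin n → α) :
    diagCons a W *ᵥ (Fin.cons b y : Fin (n + 1) → α) = Fin.cons (a * b) (W *ᵥ y) := by
  ext i
  cases i using Fin.cases <;> simp [mulVec, dotProduct, Fin.sum_univ_succ]

lemma diagCons_conjTranspose [AddMonoid α] [StarAddMonoid α] (a : α)
    (W : Matrix (Fin m) (Fin n) α) : (diagCons a W)ᴴ = diagCons (star a) Wᴴ := by
  ext i j
  cases i using Fin.cases <;> cases j using Fin.cases <;> simp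

lemma diagCons_one_one [Zero α] [One α] : diagCons (1 : α) (1 : Matrix (Fin m) (Fin m) α) = 1 := by
  ext i j
  cases i using Fin.cases <;> cases j using Fin.cases <;>
    simp [one_apply, Fin.succ_ne_zero, (Fin.succ_ne_zero _).symm]

lemma diagCons_one_mem_unitary [Semiring α] [StarRing α] {U : Matrix (Fin m) (Fin m) α}
    (hU : U ∈ unitary (Matrix (Fin m) (Fin m) α)) :
    diagCons 1 U ∈ unitary (Matrix (Fin (m + 1)) (Fin (m + 1)) α) := by
  rw [Unitary.mem_iff, star_eq_conjTranspose, diagCons_conjTranspose, star_one, diagCons_mul,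
    diagCons_mul, one_mul, ← star_eq_conjTranspose, Unitary.star_mul_self_of_mem hU,
    Unitary.mul_star_self_of_mem hU, diagCons_one_one]
  exact ⟨rfl, rfl⟩

end DiagCons

lemma Dmat_cons {m n : ℕ} (a : ℝ) (σ : Fin (min m n) → ℝ) :
    Dmat (Fin.cons a σ ∘ Fin.cast (Nat.succ_min_succ m n)) = diagCons (a : Quat) (Dmat σ) := by
  refine Matrix.ext fun i j => ?_
  cases i using Fin.cases <;> cases j using Fin.cases <;> simp [Dmat]
  split_ifs <;> rfl

lemma antitone_cons {α : Type*} [Preorder α] {M : ℕ} {a : α} {σ : Fin M → α} (hσ : Antitone σ)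
    (ha : ∀ i, σ i ≤ a) : Antitone (Fin.cons a σ : Fin (M + 1) → α) := by
  intro i j hij
  cases j using Fin.cases with
  | zero => rw [nonpos_iff_eq_zero.mp hij]
  | succ j =>
    cases i using Fin.cases with
    | zero => exact ha j
    | succ i => exact hσ (Fin.succ_le_succ_iff.mp hij)

lemma forall_cons {α : Type*} {M : ℕ} {P : α → Prop} {a : α} {σ : Fin M → α} (ha : P a)
    (hσ : ∀ i, P (σ i)) (j : Fin (M + 1)) : P ((Fin.cons a σ : Fin (M + 1) → α) j) :=
  Fin.cases ha hσ j

def NormBound {m n : ℕ} (A : Matrix (Fin m) (Fin n) Quat) (c : ℝ) : Prop :=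
  ∀ x, ‖A *ᵥ x‖₂ ≤ c * ‖x‖₂

namespace NormBound

variable {m n : ℕ} {c : ℝ}

lemma of_isQUnitary_conj {X : Matrix (Fin m) (Fin n) Quat} {U : Matrix (Fin m) (Fin m) Quat}
    {V : Matrix (Fin n) (Fin n) Quat} (h : NormBound (U * X * Vᴴ) c) (hU : IsQUnitary U)
    (hV : IsQUnitary V) : NormBound X c := fun x => by
  have hx := h (V *ᵥ x)
  rwa [← mulVec_mulVec, ← mulVec_mulVec, mulVec_mulVec x Vᴴ V, hV.1, one_mulVec,
    norm_mulVec_of_conjTranspose_mul_self hU.1, norm_mulVec_of_conjTranspose_mul_self hV.1] at hx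

lemma norm_le_of_diagCons {a : Quat} {W : Matrix (Fin m) (Fin n) Quat}
    (h : NormBound (diagCons a W) c) : ‖a‖ ≤ c := by
  have hx := h (Fin.cons 1 0)
  rw [diagCons_mulVec_cons, mulVec_zero, mul_one] at hx
  simpa [cons_zero_eq_single] using hx

lemma of_diagCons {a : Quat} {W : Matrix (Fin m) (Fin n) Quat}
    (h : NormBound (diagCons a W) c) : NormBound W c := fun y => by
  have hy := h (Fin.cons 0 y)
  rwa [diagCons_mulVec_cons, mul_zero, norm_cons_zero, norm_cons_zero] at hy

end NormBound

lemma exists_normBound_norm_mulVec {m n : ℕ} (A : Matrix (Fin m) (Fin (n + 1)) Quat) :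
    ∃ v : Fin (n + 1) → Quat, ‖v‖₂ = 1 ∧ NormBound A ‖A *ᵥ v‖₂ := by
  let f : PiLp 2 (fun _ : Fin (n + 1) => Quat) → ℝ := fun x => ‖A *ᵥ x.ofLp‖₂
  have hf : Continuous f := by fun_prop
  obtain ⟨v, hv, hmax⟩ := (isCompact_sphere 0 1).exists_isMaxOn
    (NormedSpace.sphere_nonempty.mpr zero_le_one) hf.continuousOn
  refine ⟨v.ofLp, by simpa using hv, fun x => ?_⟩
  rcases eq_or_ne ‖x‖₂ 0 with hx | hx
  · obtain rfl : x = 0 := by simpa using hx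
    simp
  have hle : ‖A *ᵥ (‖x‖₂⁻¹ • x)‖₂ ≤ ‖A *ᵥ v.ofLp‖₂ :=
    isMaxOn_iff.mp hmax (WithLp.toLp 2 (‖x‖₂⁻¹ • x)) (by simp [norm_smul, hx])
  rw [mulVec_smul, WithLp.toLp_smul, norm_smul, norm_inv, norm_norm] at hle
  rwa [inv_mul_le_iff₀ ((norm_nonneg _).lt_of_ne' hx), mul_comm] at hle

/-- Testing `B` against the conjugate of its first row `r` gives `‖r‖² ≤ s ‖r‖`, while
`‖r‖² = s² + ‖tail r‖²`. -/
lemma zero_succ_eq_zero_of_normBound {m n : ℕ} {B : Matrix (Fin (m + 1)) (Fin (n + 1)) Quat}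
    {s : ℝ} (hB : NormBound B s) (h00 : B 0 0 = s) (j : Fin n) : B 0 j.succ = 0 := by
  set r := B 0
  have hle : ‖r‖₂ ^ 2 ≤ s * ‖r‖₂ :=
    calc ‖r‖₂ ^ 2 = ‖(B *ᵥ star r) 0‖ := by
          rw [show (B *ᵥ star r) 0 = r ⬝ᵥ star r from rfl, dotProduct_star_self,
            Quaternion.norm_coe, Real.norm_of_nonneg (sq_nonneg _)]
      _ ≤ ‖B *ᵥ star r‖₂ := PiLp.norm_apply_le (WithLp.toLp 2 (B *ᵥ star r)) 0
      _ ≤ s * ‖star r‖₂ := hB _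
      _ = s * ‖r‖₂ := by rw [norm_star_vec]
  have hsplit : ‖r‖₂ ^ 2 = s ^ 2 + ‖Fin.tail r‖₂ ^ 2 := by
    conv_lhs => rw [← Fin.cons_self_tail r]
    rw [sq_norm_cons, h00, Quaternion.norm_coe, Real.norm_eq_abs, sq_abs]
  have htail : ‖Fin.tail r‖₂ ^ 2 ≤ 0 := by nlinarith [sq_nonneg (‖r‖₂ - s)]
  have : Fin.tail r = 0 := by simpa using htail
  exact congrFun this j

/-- Here `s` is the maximum of `‖A *ᵥ v‖₂` over unit vectors `v`, and the first column of `V`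
is a maximizer. -/
lemma exists_eq_mul_diagCons_mul {m n : ℕ} (A : Matrix (Fin (m + 1)) (Fin (n + 1)) Quat) :
    ∃ (U : Matrix (Fin (m + 1)) (Fin (m + 1)) Quat) (V : Matrix (Fin (n + 1)) (Fin (n + 1)) Quat)
      (s : ℝ) (B' : Matrix (Fin m) (Fin n) Quat),
      IsQUnitary U ∧ IsQUnitary V ∧ 0 ≤ s ∧ NormBound B' s ∧
      A = U * diagCons (s : Quat) B' * Vᴴ := by
  obtain ⟨v, hv, hAv⟩ := exists_normBound_norm_mulVec A
  set s := ‖A *ᵥ v‖₂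
  obtain ⟨u, hu, hsu⟩ := exists_unit_smul_eq (A *ᵥ v)
  obtain ⟨U, hU, hUe⟩ := exists_isQUnitary_mulVec_single hu
  obtain ⟨V, hV, hVe⟩ := exists_isQUnitary_mulVec_single hv
  set B := Uᴴ * A * V
  have hA : A = U * B * Vᴴ := by
    simp only [B, ← Matrix.mul_assoc, hU.2, Matrix.one_mul]
    rw [Matrix.mul_assoc, hV.2, Matrix.mul_one]
  have hBs : NormBound B s := (hA ▸ hAv).of_isQUnitary_conj hU hV
  have hBe : B *ᵥ Pi.single 0 1 = s • Pi.single 0 1 := by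
    rw [← mulVec_mulVec, hVe, ← mulVec_mulVec, hsu, mulVec_smul, ← hUe, mulVec_mulVec, hU.1,
      one_mulVec]
  have hcol : ∀ i, B i 0 = (s • Pi.single 0 1 : Fin (m + 1) → Quat) i := fun i => by
    rw [← hBe, mulVec_single_one, col_apply]
  have h00 : B 0 0 = s := by simpa [← Quaternion.coe_mul_eq_smul] using hcol 0
  have hB : B = diagCons (s : Quat) (B.submatrix Fin.succ Fin.succ) := by
    rw [← h00]
    exact eq_diagCons B (fun i => by simpa using hcol i.succ)
      (zero_succ_eq_zero_of_normBound hBs h00)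
  exact ⟨U, V, s, B.submatrix Fin.succ Fin.succ, hU, hV, norm_nonneg _, (hB ▸ hBs).of_diagCons,
    hB ▸ hA⟩

lemma exists_svd_of_min_eq_zero {m n : ℕ} (h : min m n = 0) (A : Matrix (Fin m) (Fin n) Quat) :
    ∃ (U : Matrix (Fin m) (Fin m) Quat) (V : Matrix (Fin n) (Fin n) Quat)
      (σ : Fin (min m n) → ℝ), IsQUnitary U ∧ IsQUnitary V ∧ Antitone σ ∧ (∀ i, 0 ≤ σ i) ∧
      (∀ c, NormBound A c → ∀ i, σ i ≤ c) ∧ A = U * Dmat σ * Vᴴ := by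
  refine ⟨1, 1, 0, isQUnitary_iff_mem_unitary.mpr (one_mem _),
    isQUnitary_iff_mem_unitary.mpr (one_mem _), antitone_const, fun _ => le_rfl,
    fun _ _ i => absurd i.isLt (by omega), ?_⟩
  rcases Nat.min_eq_zero_iff.mp h with rfl | rfl <;> exact Subsingleton.elim _ _

/-- The bound on `σ` by every operator-norm bound of `A` is the induction invariant that keeps
`σ` antitone. -/
theorem exists_svd (m n : ℕ) (A : Matrix (Fin m) (Fin n) Quat) :
    ∃ (U : Matrix (Fin m) (Fin m) Quat) (V : Matrix (Fin n) (Fin n) Quat)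
      (σ : Fin (min m n) → ℝ), IsQUnitary U ∧ IsQUnitary V ∧ Antitone σ ∧ (∀ i, 0 ≤ σ i) ∧
      (∀ c, NormBound A c → ∀ i, σ i ≤ c) ∧ A = U * Dmat σ * Vᴴ := by
  induction m generalizing n with
  | zero => exact exists_svd_of_min_eq_zero (Nat.zero_min n) A
  | succ m ih =>
    cases n with
    | zero => exact exists_svd_of_min_eq_zero (Nat.min_zero _) A
    | succ n =>
      obtain ⟨U, V, s, B, hU, hV, hs, hBs, rfl⟩ := exists_eq_mul_diagCons_mul A
      obtain ⟨U', V', σ', hU', hV', hσ', hσ'0, hσ'B, rfl⟩ := ih n B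
      refine ⟨U * diagCons 1 U', V * diagCons 1 V',
        Fin.cons s σ' ∘ Fin.cast (Nat.succ_min_succ m n),
        mul_mem hU (diagCons_one_mem_unitary hU'), mul_mem hV (diagCons_one_mem_unitary hV'),
        (antitone_cons hσ' (hσ'B s hBs)).comp_monotone fun _ _ h => h,
        fun i => forall_cons (P := (0 ≤ ·)) hs hσ'0 _, fun c hc i => ?_, ?_⟩
      · have hc' := hc.of_isQUnitary_conj hU hV
        have hsc : s ≤ c := by simpa [abs_of_nonneg hs] using hc'.norm_le_of_diagCons
        exact forall_cons (P := (· ≤ c)) hsc (hσ'B c hc'.of_diagCons) _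
      · rw [Dmat_cons, conjTranspose_mul, diagCons_conjTranspose, star_one]
        simp only [Matrix.mul_assoc]
        congr 1
        simp only [← Matrix.mul_assoc, diagCons_mul, one_mul, mul_one]

end QSVD

theorem qsvd_exists (m n : ℕ) (A : Matrix (Fin m) (Fin n) Quat) :
    ∃ (U : Matrix (Fin m) (Fin m) Quat) (V : Matrix (Fin n) (Fin n) Quat)
      (σ : Fin (min m n) → ℝ),
      IsQUnitary U ∧ IsQUnitary V ∧ Antitone σ ∧ (∀ i, 0 ≤ σ i) ∧
      A = U * Dmat σ * Vᴴ := by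
  obtain ⟨U, V, σ, hU, hV, hσ, hσ0, -, hA⟩ := QSVD.exists_svd m n A
  exact ⟨U, V, σ, hU, hV, hσ, hσ0, hA⟩
end
end

section
/- Closed form of the ordered ℓ1-minus-ℓ2 proximal problem: let y ∈ ℝ^m satisfy y₁ ≥ y₂ ≥ … ≥ y_m ≥ 0, let λ > 0, α > 0, and suppose y₁ > λ. Define z ∈ ℝ^m by z_i = max(y_i − λ, 0) and x* = ((‖z‖₂ + αλ)/‖z‖₂) · z. Then x* satisfies x*₁ ≥ … ≥ x*_m ≥ 0, and for every x ∈ ℝ^m with x₁ ≥ x₂ ≥ … ≥ x_m ≥ 0 one has (1/2)‖y − x‖₂² + λ(‖x‖₁ − α‖x‖₂) ≥ (1/2)‖y − x*‖₂² + λ(‖x*‖₁ − α‖x*‖₂). -/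
/-!
For `v ≥ 0` the objective is `½‖y‖² + ½‖v‖² - ⟨y - λ, v⟩ - λα‖v‖`. As `v ≥ 0`,
`⟨y - λ, v⟩ ≤ ⟨z, v⟩ ≤ ‖z‖ ‖v‖` with `z = max (y - λ) 0`, so with `r = ‖v‖` the objective is at least
`½‖y‖² + ½r² - (‖z‖ + αλ) r ≥ ½‖y‖² - ½(‖z‖ + αλ)²`. Every step is an equality at
`x* = ((‖z‖ + αλ) / ‖z‖) z`, because `⟨y - λ, z⟩ = ‖z‖²` and `‖x*‖ = ‖z‖ + αλ`; and `x*` is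
ordered because `z` is.
-/

open Matrix BigOperators Filter

noncomputable section

def softThreshold {ι : Type*} (y : ι → ℝ) (lam : ℝ) : ι → ℝ :=
  fun i => max (y i - lam) 0

def proxObjective {ι : Type*} [Fintype ι] (y : ι → ℝ) (lam alph : ℝ) (v : ι → ℝ) : ℝ :=
  (1 / 2) * (∑ i, (y i - v i) ^ 2) +
    lam * ((∑ i, |v i|) - alph * Real.sqrt (∑ i, v i ^ 2))

section

variable {ι : Type*} (y : ι → ℝ) (lam : ℝ)

lemma softThreshold_nonneg (i : ι) : 0 ≤ softThreshold y lam i :=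
  le_max_right _ _

lemma sub_mul_softThreshold (i : ι) :
    (y i - lam) * softThreshold y lam i = softThreshold y lam i ^ 2 := by
  rcases le_total (y i - lam) 0 with h | h
  · simp [softThreshold, max_eq_right h]
  · rw [softThreshold, max_eq_left h, sq]

lemma Antitone.softThreshold [Preorder ι] {y : ι → ℝ} (hy : Antitone y) (lam : ℝ) :
    Antitone (softThreshold y lam) :=
  fun _ _ hij => max_le_max (sub_le_sub_right (hy hij) lam) le_rfl

variable [Fintype ι] (alph : ℝ)

lemma proxObjective_eq_of_nonneg {v : ι → ℝ} (hv : ∀ i, 0 ≤ v i) :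
    proxObjective y lam alph v =
      (1 / 2) * (∑ i, y i ^ 2) + (1 / 2) * (∑ i, v i ^ 2) - (∑ i, (y i - lam) * v i)
        - lam * alph * Real.sqrt (∑ i, v i ^ 2) := by
  have hsq : ∑ i, (y i - v i) ^ 2 =
      (∑ i, y i ^ 2) + (∑ i, v i ^ 2) - 2 * (∑ i, (y i - lam) * v i) - 2 * lam * (∑ i, v i) := by
    simp only [Finset.mul_sum, ← Finset.sum_add_distrib, ← Finset.sum_sub_distrib]
    exact Finset.sum_congr rfl fun i _ => by ring
  simp only [proxObjective, abs_of_nonneg (hv _), hsq]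
  ring

lemma proxObjective_ge {v : ι → ℝ} (hv : ∀ i, 0 ≤ v i) :
    (1 / 2) * (∑ i, y i ^ 2)
        - (1 / 2) * (Real.sqrt (∑ i, softThreshold y lam i ^ 2) + alph * lam) ^ 2 ≤
      proxObjective y lam alph v := by
  set nz := Real.sqrt (∑ i, softThreshold y lam i ^ 2)
  set r := Real.sqrt (∑ i, v i ^ 2)
  have hr : r ^ 2 = ∑ i, v i ^ 2 := Real.sq_sqrt (Finset.sum_nonneg fun i _ => sq_nonneg _)
  have hinner : ∑ i, (y i - lam) * v i ≤ nz * r :=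
    calc ∑ i, (y i - lam) * v i ≤ ∑ i, softThreshold y lam i * v i :=
          Finset.sum_le_sum fun i _ => mul_le_mul_of_nonneg_right (le_max_left _ _) (hv i)
      _ ≤ nz * r := Real.sum_mul_le_sqrt_mul_sqrt _ _ _
  rw [proxObjective_eq_of_nonneg y lam alph hv]
  nlinarith [sq_nonneg (r - (nz + alph * lam))]

lemma proxObjective_smul_softThreshold
    (hnz : 0 < Real.sqrt (∑ i, softThreshold y lam i ^ 2))
    (ht : 0 ≤ Real.sqrt (∑ i, softThreshold y lam i ^ 2) + alph * lam) :
    let nz := Real.sqrt (∑ i, softThreshold y lam i ^ 2)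
    proxObjective y lam alph (fun i => ((nz + alph * lam) / nz) * softThreshold y lam i) =
      (1 / 2) * (∑ i, y i ^ 2) - (1 / 2) * (nz + alph * lam) ^ 2 := by
  intro nz
  set c := (nz + alph * lam) / nz
  have hsum : ∑ i, softThreshold y lam i ^ 2 = nz ^ 2 :=
    (Real.sq_sqrt (Finset.sum_nonneg fun i _ => sq_nonneg _)).symm
  have hc : c * nz = nz + alph * lam := div_mul_cancel₀ _ hnz.ne'
  have hsq : ∑ i, (c * softThreshold y lam i) ^ 2 = (c * nz) ^ 2 := by
    simp only [mul_pow, ← Finset.mul_sum, hsum]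
  have hinner : ∑ i, (y i - lam) * (c * softThreshold y lam i) = c * nz * nz := by
    simp only [mul_left_comm _ c, ← Finset.mul_sum, sub_mul_softThreshold, hsum]
    ring
  rw [proxObjective_eq_of_nonneg y lam alph
      fun i => mul_nonneg (div_nonneg ht hnz.le) (softThreshold_nonneg y lam i),
    hsq, hinner, Real.sqrt_sq (hc ▸ ht), hc]
  ring

end

theorem ordered_l1_minus_l2_prox_general (m : ℕ) (hm : 0 < m) (y : Fin m → ℝ)
    (hmono : Antitone y)
    (lam alph : ℝ) (hlam : 0 < lam) (halph : 0 < alph)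
    (hy1 : lam < y ⟨0, hm⟩) :
    let z : Fin m → ℝ := fun i => max (y i - lam) 0
    let nz : ℝ := Real.sqrt (∑ i, z i ^ 2)
    let xstar : Fin m → ℝ := fun i => ((nz + alph * lam) / nz) * z i
    (Antitone xstar ∧ ∀ i, 0 ≤ xstar i) ∧
    ∀ x : Fin m → ℝ, Antitone x → (∀ i, 0 ≤ x i) →
      (1 / 2) * (∑ i, (y i - xstar i) ^ 2) +
        lam * ((∑ i, |xstar i|) - alph * Real.sqrt (∑ i, xstar i ^ 2)) ≤
      (1 / 2) * (∑ i, (y i - x i) ^ 2) +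
        lam * ((∑ i, |x i|) - alph * Real.sqrt (∑ i, x i ^ 2)) := by
  intro z nz xstar
  have hnz : 0 < nz := Real.sqrt_pos.2 <| Finset.sum_pos' (fun i _ => sq_nonneg _)
    ⟨⟨0, hm⟩, Finset.mem_univ _, pow_pos (lt_max_of_lt_left (sub_pos.2 hy1)) 2⟩
  have ht : 0 ≤ nz + alph * lam := by positivity
  have hc : 0 ≤ (nz + alph * lam) / nz := div_nonneg ht hnz.le
  refine ⟨⟨fun i j hij => mul_le_mul_of_nonneg_left (hmono.softThreshold lam hij) hc,
    fun i => mul_nonneg hc (softThreshold_nonneg y lam i)⟩, fun x _ hx => ?_⟩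
  change proxObjective y lam alph xstar ≤ proxObjective y lam alph x
  exact (proxObjective_smul_softThreshold y lam alph hnz ht).le.trans
    (proxObjective_ge y lam alph hx)

theorem ordered_l1_minus_l2_prox (m : ℕ) (hm : 0 < m) (y : Fin m → ℝ)
    (hmono : Antitone y) (hnn : ∀ i, 0 ≤ y i)
    (lam alph : ℝ) (hlam : 0 < lam) (halph : 0 < alph)
    (hy1 : lam < y ⟨0, hm⟩) :
    let z : Fin m → ℝ := fun i => max (y i - lam) 0
    let nz : ℝ := Real.sqrt (∑ i, z i ^ 2)
    let xstar : Fin m → ℝ := fun i => ((nz + alph * lam) / nz) * z i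
    (Antitone xstar ∧ ∀ i, 0 ≤ xstar i) ∧
    ∀ x : Fin m → ℝ, Antitone x → (∀ i, 0 ≤ x i) →
      (1 / 2) * (∑ i, (y i - xstar i) ^ 2) +
        lam * ((∑ i, |xstar i|) - alph * Real.sqrt (∑ i, xstar i ^ 2)) ≤
      (1 / 2) * (∑ i, (y i - x i) ^ 2) +
        lam * ((∑ i, |x i|) - alph * Real.sqrt (∑ i, x i ^ 2)) :=
  ordered_l1_minus_l2_prox_general m hm y hmono lam alph hlam halph hy1
end
end

section
/- Von Neumann trace inequality for quaternion matrices: let X and Y be m×n quaternion matrices with decompositions X = P * D(s) * Qᴴ and Y = U * D(t) * Vᴴ, where P, U are unitary m×m quaternion matrices, Q, V are unitary n×n quaternion matrices, and s, t ∈ ℝ^M (M = min(m,n)) satisfy s₁ ≥ … ≥ s_M ≥ 0 and t₁ ≥ … ≥ t_M ≥ 0. Then the real part of the trace of Xᴴ * Y satisfies Re(tr(Xᴴ * Y)) ≤ ∑_{i=1}^{M} s_i t_i. -/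
open Matrix BigOperators Filter

noncomputable section

/-! Cycling the trace turns `Re tr(Xᴴ Y)` into `Re tr(D(s)ᴴ A D(t) B)` with `A = Pᴴ U` and
`B = Vᴴ Q` unitary, that is `∑ k l, s k * t l * Re (A k l * B l k)`. Since
`Re (a b) ≤ (‖a‖² + ‖b‖²) / 2` and the rows and columns of a unitary matrix are unit vectors,
the weights `(‖A k l‖² + ‖B l k‖²) / 2` form a doubly substochastic matrix `W`, and
`s ⬝ᵥ W *ᵥ t ≤ s ⬝ᵥ t` for antitone nonnegative `s`, `t`: lowering `s` and `t` by their last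
entries costs at least as much on the right as on the left, and leaves vectors whose last entries
vanish, to which induction on the dimension applies. -/

namespace Quaternion

theorem re_sum {ι : Type*} (s : Finset ι) (f : ι → Quat) :
    (∑ i ∈ s, f i).re = ∑ i ∈ s, (f i).re :=
  map_sum (QuaternionAlgebra.reₗ (-1 : ℝ) 0 (-1)) f s

theorem re_mul_comm (a b : Quat) : (a * b).re = (b * a).re := by
  simp only [re_mul]; ring

theorem re_mul_le_norm_mul_norm (a b : Quat) : (a * b).re ≤ ‖a‖ * ‖b‖ := by
  simpa [inner_def] using real_inner_le_norm a (star b)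

theorem re_mul_le_half_add_sq (a b : Quat) : (a * b).re ≤ (‖a‖ ^ 2 + ‖b‖ ^ 2) / 2 := by
  nlinarith [re_mul_le_norm_mul_norm a b, two_mul_le_add_sq ‖a‖ ‖b‖]

theorem re_mul_star (a : Quat) : (a * star a).re = ‖a‖ ^ 2 := by
  rw [← inner_def, real_inner_self_eq_norm_sq]

theorem re_star_mul (a : Quat) : (star a * a).re = ‖a‖ ^ 2 := by
  rw [re_mul_comm, re_mul_star]

end Quaternion

theorem Matrix.re_trace_mul_comm {ι κ : Type*} [Fintype ι] [Fintype κ]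
    (A : Matrix ι κ Quat) (B : Matrix κ ι Quat) : (A * B).trace.re = (B * A).trace.re := by
  simp only [trace, diag, mul_apply, Quaternion.re_sum]
  rw [Finset.sum_comm]
  simp only [Quaternion.re_mul_comm]

theorem IsQUnitary.mem_unitary {k : ℕ} {U : Matrix (Fin k) (Fin k) Quat} (hU : IsQUnitary U) :
    U ∈ unitary (Matrix (Fin k) (Fin k) Quat) :=
  Unitary.mem_iff.2 hU

section Unitary

variable {ι : Type*} [Fintype ι] [DecidableEq ι] {A : Matrix ι ι Quat}

theorem sum_norm_sq_row_of_mem_unitary (hA : A ∈ unitary (Matrix ι ι Quat)) (i : ι) :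
    ∑ j, ‖A i j‖ ^ 2 = 1 := by
  have := congrArg (fun M : Matrix ι ι Quat => (M i i).re) (Unitary.mul_star_self_of_mem hA)
  simpa only [mul_apply, star_apply, Quaternion.re_sum, Quaternion.re_mul_star, one_apply_eq,
    Quaternion.re_one] using this

theorem sum_norm_sq_col_of_mem_unitary (hA : A ∈ unitary (Matrix ι ι Quat)) (j : ι) :
    ∑ i, ‖A i j‖ ^ 2 = 1 := by
  have := congrArg (fun M : Matrix ι ι Quat => (M j j).re) (Unitary.star_mul_self_of_mem hA)
  simpa only [mul_apply, star_apply, Quaternion.re_sum, Quaternion.re_star_mul, one_apply_eq,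
    Quaternion.re_one] using this

end Unitary

theorem Fintype.sum_comp_le_sum_of_injective {ι κ N : Type*} [Fintype ι] [Fintype κ]
    [AddCommMonoid N] [Preorder N] [AddLeftMono N] {e : ι → κ} (he : Function.Injective e)
    {f : κ → N} (hf : ∀ j, 0 ≤ f j) : ∑ i, f (e i) ≤ ∑ j, f j := by
  simpa using Finset.sum_le_univ_sum_of_nonneg (s := Finset.univ.map ⟨e, he⟩) hf

theorem dotProduct_mulVec_le_dotProduct_of_antitone {M : ℕ} {s t : Fin M → ℝ}
    (hs : Antitone s) (hs₀ : 0 ≤ s) (ht : Antitone t) (ht₀ : 0 ≤ t)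
    {W : Matrix (Fin M) (Fin M) ℝ} (hW : ∀ i j, 0 ≤ W i j)
    (hrow : ∀ i, ∑ j, W i j ≤ 1) (hcol : ∀ j, ∑ i, W i j ≤ 1) :
    s ⬝ᵥ W *ᵥ t ≤ s ⬝ᵥ t := by
  induction M with
  | zero => simp
  | succ M ih =>
    set a := s (Fin.last M)
    set b := t (Fin.last M)
    set s' := s - a • 1
    set t' := t - b • 1
    have hs' : 0 ≤ s' := fun i => sub_nonneg.2 (by simpa using hs (Fin.le_last i))
    have ht' : 0 ≤ t' := fun i => sub_nonneg.2 (by simpa using ht (Fin.le_last i))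
    have hrow' : ∀ i : Fin M, ∑ j : Fin M, W i.castSucc j.castSucc ≤ 1 := fun i =>
      (hrow _).trans' (by rw [Fin.sum_univ_castSucc]; exact le_add_of_nonneg_right (hW _ _))
    have hcol' : ∀ j : Fin M, ∑ i : Fin M, W i.castSucc j.castSucc ≤ 1 := fun j =>
      (hcol _).trans' (by rw [Fin.sum_univ_castSucc]; exact le_add_of_nonneg_right (hW _ _))
    -- `s'` and `t'` vanish at the last index, so only the leading `M × M` block of `W` matters.
    have hlow : s' ⬝ᵥ W *ᵥ t' ≤ s' ⬝ᵥ t' := by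
      have := ih (s := s' ∘ Fin.castSucc) (t := t' ∘ Fin.castSucc)
        (fun i j hij => by simpa [s'] using hs (Fin.castSucc_le_castSucc_iff.2 hij))
        (fun i => hs' _)
        (fun i j hij => by simpa [t'] using ht (Fin.castSucc_le_castSucc_iff.2 hij))
        (fun i => ht' _)
        (W := W.submatrix Fin.castSucc Fin.castSucc) (fun i j => hW _ _) hrow' hcol'
      simpa [dotProduct, mulVec, Fin.sum_univ_castSucc, s', t', a, b] using this
    have hconst_left : (a • 1) ⬝ᵥ W *ᵥ t ≤ (a • 1) ⬝ᵥ t := by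
      rw [smul_dotProduct, smul_dotProduct, dotProduct_mulVec]
      refine mul_le_mul_of_nonneg_left
        (dotProduct_le_dotProduct_of_nonneg_right (fun j => ?_) ht₀) (hs₀ _)
      simpa [vecMul, dotProduct] using hcol j
    have hconst_right : s' ⬝ᵥ W *ᵥ (b • 1) ≤ s' ⬝ᵥ (b • 1) := by
      rw [mulVec_smul, dotProduct_smul, dotProduct_smul]
      refine mul_le_mul_of_nonneg_left
        (dotProduct_le_dotProduct_of_nonneg_left (fun i => ?_) hs') (ht₀ _)
      simpa [mulVec, dotProduct] using hrow i
    have hs_split : s = s' + a • 1 := (sub_add_cancel _ _).symm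
    have ht_split : t = t' + b • 1 := (sub_add_cancel _ _).symm
    calc s ⬝ᵥ W *ᵥ t = s' ⬝ᵥ W *ᵥ t' + s' ⬝ᵥ W *ᵥ (b • 1) + (a • 1) ⬝ᵥ W *ᵥ t := by
          conv_lhs =>
            rw [hs_split, add_dotProduct]; enter [1]; rw [ht_split, mulVec_add, dotProduct_add]
      _ ≤ s' ⬝ᵥ t' + s' ⬝ᵥ (b • 1) + (a • 1) ⬝ᵥ t := by gcongr
      _ = s ⬝ᵥ t := by
          conv_rhs => rw [hs_split, add_dotProduct]; enter [1]; rw [ht_split, dotProduct_add]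

theorem sum_mul_mul_re_le_of_mem_unitary {M : ℕ} {κ₁ κ₂ : Type*} [Fintype κ₁] [DecidableEq κ₁]
    [Fintype κ₂] [DecidableEq κ₂] {s t : Fin M → ℝ}
    (hs : Antitone s) (hs₀ : 0 ≤ s) (ht : Antitone t) (ht₀ : 0 ≤ t)
    {A : Matrix κ₁ κ₁ Quat} {B : Matrix κ₂ κ₂ Quat}
    (hA : A ∈ unitary (Matrix κ₁ κ₁ Quat)) (hB : B ∈ unitary (Matrix κ₂ κ₂ Quat))
    {e₁ : Fin M → κ₁} {e₂ : Fin M → κ₂} (he₁ : Function.Injective e₁)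
    (he₂ : Function.Injective e₂) :
    ∑ k, ∑ l, s k * t l * (A (e₁ k) (e₁ l) * B (e₂ l) (e₂ k)).re ≤ ∑ k, s k * t k := by
  set W : Matrix (Fin M) (Fin M) ℝ := fun k l =>
    (‖A (e₁ k) (e₁ l)‖ ^ 2 + ‖B (e₂ l) (e₂ k)‖ ^ 2) / 2
  have hrow : ∀ k, ∑ l, W k l ≤ 1 := fun k => by
    have hA' := (Fintype.sum_comp_le_sum_of_injective he₁ (fun j => sq_nonneg ‖A (e₁ k) j‖)).trans
      (sum_norm_sq_row_of_mem_unitary hA (e₁ k)).le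
    have hB' := (Fintype.sum_comp_le_sum_of_injective he₂ (fun i => sq_nonneg ‖B i (e₂ k)‖)).trans
      (sum_norm_sq_col_of_mem_unitary hB (e₂ k)).le
    simp only [W, ← Finset.sum_div, Finset.sum_add_distrib]
    linarith
  have hcol : ∀ l, ∑ k, W k l ≤ 1 := fun l => by
    have hA' := (Fintype.sum_comp_le_sum_of_injective he₁ (fun i => sq_nonneg ‖A i (e₁ l)‖)).trans
      (sum_norm_sq_col_of_mem_unitary hA (e₁ l)).le
    have hB' := (Fintype.sum_comp_le_sum_of_injective he₂ (fun j => sq_nonneg ‖B (e₂ l) j‖)).trans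
      (sum_norm_sq_row_of_mem_unitary hB (e₂ l)).le
    simp only [W, ← Finset.sum_div, Finset.sum_add_distrib]
    linarith
  calc ∑ k, ∑ l, s k * t l * (A (e₁ k) (e₁ l) * B (e₂ l) (e₂ k)).re
      ≤ ∑ k, ∑ l, s k * t l * W k l := by
        gcongr with k _ l _
        · exact mul_nonneg (hs₀ k) (ht₀ l)
        · exact Quaternion.re_mul_le_half_add_sq _ _
    _ = s ⬝ᵥ W *ᵥ t := by
        simp only [dotProduct, mulVec, Finset.mul_sum]
        exact Finset.sum_congr rfl fun k _ => Finset.sum_congr rfl fun l _ => by ring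
    _ ≤ s ⬝ᵥ t := dotProduct_mulVec_le_dotProduct_of_antitone hs hs₀ ht ht₀
        (fun k l => by positivity) hrow hcol

section Dmat

variable {m n : ℕ}

theorem star_Dmat_apply (s : Fin (min m n) → ℝ) (i : Fin m) (j : Fin n) :
    star (Dmat s i j) = Dmat s i j := by
  unfold Dmat; split <;> simp [Quaternion.star_coe]

theorem Dmat_apply_commute (s : Fin (min m n) → ℝ) (i : Fin m) (j : Fin n) (q : Quat) :
    Commute (Dmat s i j) q := by
  unfold Dmat; split
  · exact Quaternion.coe_commutes _ _
  · exact Commute.zero_left q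

theorem sum_sum_Dmat_mul (s : Fin (min m n) → ℝ) (F : Fin m → Fin n → Quat) :
    ∑ i, ∑ j, Dmat s i j * F i j =
      ∑ k, (s k : Quat) * F (Fin.castLE (min_le_left m n) k) (Fin.castLE (min_le_right m n) k) := by
  rw [← Finset.sum_product', eq_comm]
  refine Finset.sum_of_injOn
    (fun k => (Fin.castLE (min_le_left m n) k, Fin.castLE (min_le_right m n) k))
    (fun k _ l _ hkl => Fin.castLE_injective (min_le_left m n) (congrArg Prod.fst hkl))
    (fun _ _ => by simp) ?_ ?_
  · rintro ⟨i, j⟩ - hij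
    have hne : (i : ℕ) ≠ j := fun h => hij ⟨⟨i, by omega⟩, by simp, by ext <;> simp [h]⟩
    simp [Dmat, hne]
  · intro k _
    simp [Dmat]

theorem mul_Dmat_mul_apply (t : Fin (min m n) → ℝ) (A : Matrix (Fin m) (Fin m) Quat)
    (B : Matrix (Fin n) (Fin n) Quat) (i : Fin m) (j : Fin n) :
    (A * Dmat t * B) i j = ∑ a, ∑ b, Dmat t a b * (A i a * B b j) := by
  simp only [mul_apply, Finset.sum_mul]
  rw [Finset.sum_comm]
  refine Finset.sum_congr rfl fun a _ => Finset.sum_congr rfl fun b _ => ?_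
  rw [← (Dmat_apply_commute t a b (A i a)).eq, mul_assoc]

theorem re_trace_conjTranspose_Dmat_mul (s t : Fin (min m n) → ℝ)
    (A : Matrix (Fin m) (Fin m) Quat) (B : Matrix (Fin n) (Fin n) Quat) :
    ((Dmat s)ᴴ * (A * Dmat t * B)).trace.re =
      ∑ k, ∑ l, s k * t l *
        (A (Fin.castLE (min_le_left m n) k) (Fin.castLE (min_le_left m n) l) *
          B (Fin.castLE (min_le_right m n) l) (Fin.castLE (min_le_right m n) k)).re := by
  have htrace : ((Dmat s)ᴴ * (A * Dmat t * B)).trace =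
      ∑ i, ∑ j, Dmat s i j * (A * Dmat t * B) i j := by
    simp only [trace, diag, mul_apply, conjTranspose_apply, star_Dmat_apply]
    exact Finset.sum_comm
  rw [htrace, sum_sum_Dmat_mul s (A * Dmat t * B), Quaternion.re_sum]
  refine Finset.sum_congr rfl fun k _ => ?_
  rw [mul_Dmat_mul_apply, sum_sum_Dmat_mul t, Finset.mul_sum, Quaternion.re_sum]
  refine Finset.sum_congr rfl fun l _ => ?_
  rw [← mul_assoc, ← Quaternion.coe_mul, Quaternion.coe_mul_eq_smul, Quaternion.re_smul,
    smul_eq_mul]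

end Dmat

theorem quaternion_von_neumann_trace (m n : ℕ)
    (X Y : Matrix (Fin m) (Fin n) Quat)
    (P U : Matrix (Fin m) (Fin m) Quat) (Q V : Matrix (Fin n) (Fin n) Quat)
    (s t : Fin (min m n) → ℝ)
    (hP : IsQUnitary P) (hU : IsQUnitary U) (hQ : IsQUnitary Q) (hV : IsQUnitary V)
    (hs : Antitone s) (hsnn : ∀ i, 0 ≤ s i)
    (ht : Antitone t) (htnn : ∀ i, 0 ≤ t i)
    (hX : X = P * Dmat s * Qᴴ) (hY : Y = U * Dmat t * Vᴴ) :
    (Matrix.trace (Xᴴ * Y)).re ≤ ∑ i, s i * t i := by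
  have hPU : Pᴴ * U ∈ unitary _ :=
    Submonoid.mul_mem _ (Unitary.star_mem hP.mem_unitary) hU.mem_unitary
  have hVQ : Vᴴ * Q ∈ unitary _ :=
    Submonoid.mul_mem _ (Unitary.star_mem hV.mem_unitary) hQ.mem_unitary
  have hcycle : (Xᴴ * Y).trace.re = ((Dmat s)ᴴ * ((Pᴴ * U) * Dmat t * (Vᴴ * Q))).trace.re := by
    rw [hX, hY, conjTranspose_mul, conjTranspose_mul, conjTranspose_conjTranspose,
      Matrix.mul_assoc Q, re_trace_mul_comm]
    simp only [Matrix.mul_assoc]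
  rw [hcycle, re_trace_conjTranspose_Dmat_mul]
  exact sum_mul_mul_re_le_of_mem_unitary hs hsnn ht htnn hPU hVQ
    (Fin.castLE_injective _) (Fin.castLE_injective _)
end
end

section
/- Pointwise and ℓ2 bounds for the QNMF singular value shrinkage: let λ > 0, α > 0 and let σ ∈ ℝ^M satisfy σ₁ ≥ … ≥ σ_M ≥ 0, and let σ̃ = S_{λ,α}(σ) be the QNMF shrinkage of σ. Then for every index i one has 0 ≤ σ̃_i ≤ σ_i and σ_i − σ̃_i ≤ λ; consequently ∑_{i=1}^{M} (σ_i − σ̃_i)² ≤ M·λ². -/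
open Matrix BigOperators Filter

noncomputable section

/-!
On the support `σ i > λ` the shrinkage multiplies `σ i - λ/2` by `K ≥ 1`, but only up to the
threshold `Kλ / (2(K - 1))`, which is exactly where `K (σ i - λ/2) = σ i`; above it `σ i` is
kept.
So every coordinate lies between `σ i - λ/2` (resp. `0` off the support, where `σ i ≤ λ`) and
`σ i`, and the ℓ² bound follows coordinatewise.
-/

def IsShrinkWithin (lam t s : ℝ) : Prop :=
  0 ≤ s ∧ s ≤ t ∧ t - s ≤ lam

namespace IsShrinkWithin

variable {K lam t s : ℝ}

lemma self (hlam : 0 ≤ lam) (ht : 0 ≤ t) : IsShrinkWithin lam t t :=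
  ⟨ht, le_rfl, by linarith⟩

lemma zero (ht : 0 ≤ t) (htl : t ≤ lam) : IsShrinkWithin lam t 0 :=
  ⟨le_rfl, ht, by linarith⟩

lemma mul_sub_half (hK : 1 < K) (hlam : 0 ≤ lam) (htl : lam < t)
    (ht : t ≤ K * lam / (2 * (K - 1))) : IsShrinkWithin lam t (K * (t - lam / 2)) := by
  have ht' : t * (2 * (K - 1)) ≤ K * lam := (le_div_iff₀ (by linarith)).mp ht
  exact ⟨by nlinarith, by nlinarith, by nlinarith⟩

lemma sq_sub_le (h : IsShrinkWithin lam t s) : (t - s) ^ 2 ≤ lam ^ 2 := by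
  obtain ⟨_, hst, hlam⟩ := h
  exact pow_le_pow_left₀ (sub_nonneg.mpr hst) hlam 2

end IsShrinkWithin

lemma eq_zero_of_sqrt_sum_sq_eq_zero {ι : Type*} [Fintype ι] {f : ι → ℝ}
    (h : √(∑ i, f i ^ 2) = 0) (i : ι) : f i = 0 := by
  rw [Real.sqrt_eq_zero (by positivity),
    Fintype.sum_eq_zero_iff_of_nonneg fun _ => sq_nonneg _] at h
  exact pow_eq_zero_iff two_ne_zero |>.mp (congrFun h i)

theorem Sshrink_isShrinkWithin {M : ℕ} {lam alph : ℝ} (hlam : 0 < lam) (halph : 0 < alph)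
    {σ : Fin M → ℝ} (hnn : ∀ i, 0 ≤ σ i) (i : Fin M) :
    IsShrinkWithin lam (σ i) (Sshrink lam alph σ i) := by
  simp only [Sshrink]
  split_ifs with hz
  · refine .zero (hnn i) (not_lt.mp fun hl => ?_)
    have := eq_zero_of_sqrt_sum_sq_eq_zero hz i
    simp only [if_pos hl] at this
    linarith
  set nz := √(∑ i, (if lam < σ i then σ i - lam / 2 else 0) ^ 2)
  have hK : 1 < 1 + alph * lam / (2 * nz) := by
    have : 0 < nz := lt_of_le_of_ne (Real.sqrt_nonneg _) (Ne.symm hz)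
    simp only [lt_add_iff_pos_right]
    positivity
  dsimp only
  split_ifs with hT hl
  · exact .self hlam.le (hnn i)
  · exact .mul_sub_half hK hlam.le hl (not_lt.mp hT)
  · exact .zero (hnn i) (not_lt.mp hl)

theorem qnmf_shrinkage_bounds_general (M : ℕ) (lam alph : ℝ)
    (hlam : 0 < lam) (halph : 0 < alph)
    (σ : Fin M → ℝ) (hnn : ∀ i, 0 ≤ σ i) :
    (∀ i, 0 ≤ Sshrink lam alph σ i ∧ Sshrink lam alph σ i ≤ σ i ∧
      σ i - Sshrink lam alph σ i ≤ lam) ∧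
    ∑ i, (σ i - Sshrink lam alph σ i) ^ 2 ≤ M * lam ^ 2 := by
  have hS := Sshrink_isShrinkWithin hlam halph hnn
  refine ⟨hS, ?_⟩
  calc ∑ i, (σ i - Sshrink lam alph σ i) ^ 2 ≤ ∑ _i : Fin M, lam ^ 2 :=
        Finset.sum_le_sum fun i _ => (hS i).sq_sub_le
    _ = M * lam ^ 2 := by simp

theorem qnmf_shrinkage_bounds (M : ℕ) (lam alph : ℝ)
    (hlam : 0 < lam) (halph : 0 < alph)
    (σ : Fin M → ℝ) (hmono : Antitone σ) (hnn : ∀ i, 0 ≤ σ i) :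
    (∀ i, 0 ≤ Sshrink lam alph σ i ∧ Sshrink lam alph σ i ≤ σ i ∧
      σ i - Sshrink lam alph σ i ≤ lam) ∧
    ∑ i, (σ i - Sshrink lam alph σ i) ^ 2 ≤ M * lam ^ 2 :=
  qnmf_shrinkage_bounds_general M lam alph hlam halph σ hnn
end
end

section
/- Convergence of the QNMF ADMM iteration for the linear inverse problem (Theorem 3.2): let A be an m×m quaternion matrix, Y an m×n quaternion matrix, γ > 0, λ > 0, α > 0, β⁰ > 0, μ > 1, and set β^{(k)} = μ^k·β⁰. Suppose (X^{(k)}), (Z^{(k)}), (η^{(k)}) are sequences of m×n quaternion matrices such that for every k: (i) (γ·Aᴴ*A + β^{(k)}·I) * X^{(k+1)} = γ·Aᴴ*Y + β^{(k)}·Z^{(k)} − η^{(k)}; (ii) there exist unitary quaternion matrices U^{(k)}, V^{(k)} and σ^{(k)} ∈ ℝ^M (M = min(m,n)) with σ^{(k)}₁ ≥ … ≥ σ^{(k)}_M ≥ 0 such that X^{(k+1)} + η^{(k)}/β^{(k)} = U^{(k)} * D(σ^{(k)}) * (V^{(k)})ᴴ and Z^{(k+1)} = U^{(k)} * D(S_{λ/β^{(k)},α}(σ^{(k)}))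 * (V^{(k)})ᴴ; (iii) η^{(k+1)} = η^{(k)} + β^{(k)}·(X^{(k+1)} − Z^{(k+1)}). Then ‖X^{(k+1)} − Z^{(k+1)}‖_F → 0, ‖X^{(k+1)} − X^{(k)}‖_F → 0, and ‖Z^{(k+1)} − Z^{(k)}‖_F → 0 as k → ∞. -/
/-!
The multiplier stays bounded: `η⁽ᵏ⁺¹⁾ = β⁽ᵏ⁾ U (D(σ) - D(S(σ))) Vᴴ` with `U`, `V` unitary, and the
shrinkage `S_{λ/β,α}` moves every singular value by at most `λ/β⁽ᵏ⁾`, so `‖η⁽ᵏ⁺¹⁾‖_F ≤ √(mn) λ`.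
Hence `X⁽ᵏ⁺¹⁾ - Z⁽ᵏ⁺¹⁾ = (η⁽ᵏ⁺¹⁾ - η⁽ᵏ⁾)/β⁽ᵏ⁾ = O(1/β⁽ᵏ⁾)`.
The `X`-update solves `(γAᴴA + βI) x = w`, and `Re tr(xᴴw) ≥ β‖x‖²` gives `‖x‖ ≤ ‖w‖/β`.
This yields `‖Z⁽ᵏ⁺¹⁾‖ ≤ ‖Z⁽ᵏ⁾‖ + O(1/β⁽ᵏ⁾)`, so `Z` is bounded because `∑ 1/β⁽ᵏ⁾` is a convergent
geometric series, and then also `X⁽ᵏ⁺¹⁾ - Z⁽ᵏ⁾ = O(1/β⁽ᵏ⁾)`. The successive differences of `X` and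
of `Z` are sums of these two residuals.
-/

open Matrix BigOperators Filter

noncomputable section

open scoped Topology

attribute [local instance] Matrix.frobeniusSeminormedAddCommGroup
  Matrix.frobeniusNormedAddCommGroup Matrix.frobeniusNormedSpace

namespace Matrix

variable {l m n α : Type*} [Fintype l] [Fintype m] [Fintype n]

theorem frobenius_norm_eq_sqrt [SeminormedAddCommGroup α] (A : Matrix m n α) :
    ‖A‖ = √(∑ i, ∑ j, ‖A i j‖ ^ 2) := by
  simp only [frobenius_norm_def, Real.sqrt_eq_rpow, ← Real.rpow_natCast, Nat.cast_ofNat]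

theorem frobenius_norm_mul_le [SeminormedRing α] (A : Matrix l m α) (B : Matrix m n α) :
    ‖A * B‖ ≤ ‖A‖ * ‖B‖ := by
  rw [frobenius_norm_eq_sqrt, frobenius_norm_eq_sqrt, frobenius_norm_eq_sqrt,
    ← Real.sqrt_mul (by positivity)]
  gcongr
  have entry (i : l) (k : n) :
      ‖(A * B) i k‖ ^ 2 ≤ (∑ j, ‖A i j‖ ^ 2) * ∑ j, ‖B j k‖ ^ 2 := by
    calc ‖(A * B) i k‖ ^ 2 ≤ (∑ j, ‖A i j‖ * ‖B j k‖) ^ 2 := by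
          gcongr
          exact (norm_sum_le _ _).trans (Finset.sum_le_sum fun j _ => norm_mul_le _ _)
      _ ≤ _ := Finset.sum_mul_sq_le_sq_mul_sq _ _ _
  calc ∑ i, ∑ k, ‖(A * B) i k‖ ^ 2
      ≤ ∑ i, ∑ k, (∑ j, ‖A i j‖ ^ 2) * ∑ j, ‖B j k‖ ^ 2 := by
        gcongr with i _ k _; exact entry i k
    _ = (∑ i, ∑ j, ‖A i j‖ ^ 2) * ∑ j, ∑ k, ‖B j k‖ ^ 2 := by
        rw [Finset.sum_mul]; simp_rw [← Finset.mul_sum]; rw [Finset.sum_comm (γ := n)]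

theorem frobenius_norm_le_of_forall_norm_le [SeminormedAddCommGroup α] {A : Matrix m n α}
    {b : ℝ} (hb : 0 ≤ b) (h : ∀ i j, ‖A i j‖ ≤ b) :
    ‖A‖ ≤ √(Fintype.card m * Fintype.card n) * b := by
  rw [frobenius_norm_eq_sqrt, ← Real.sqrt_sq hb, ← Real.sqrt_mul (by positivity)]
  gcongr
  calc ∑ i, ∑ j, ‖A i j‖ ^ 2 ≤ ∑ _i : m, ∑ _j : n, b ^ 2 := by gcongr with i _ j _; exact h i j
    _ = _ := by simp only [Finset.sum_const, Finset.card_univ, nsmul_eq_mul]; ring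

end Matrix

theorem frob_eq_norm {m n : ℕ} (A : Matrix (Fin m) (Fin n) Quat) : frob A = ‖A‖ :=
  (frobenius_norm_eq_sqrt A).symm

theorem Quaternion.re_sum_s7 {ι : Type*} (s : Finset ι) (f : ι → Quat) :
    (∑ i ∈ s, f i).re = ∑ i ∈ s, (f i).re :=
  map_sum (QuaternionAlgebra.reₗ (-1 : ℝ) 0 (-1)) f s

section QuaternionMatrix

variable {l m n : Type*} [Fintype l] [Fintype m] [Fintype n]

theorem re_trace_conjTranspose_mul_self (A : Matrix m n Quat) :
    (Aᴴ * A).trace.re = ‖A‖ ^ 2 := by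
  rw [frobenius_norm_eq_sqrt, Real.sq_sqrt (by positivity), Finset.sum_comm]
  simp only [trace, diag_apply, mul_apply, conjTranspose_apply, Quaternion.re_sum_s7,
    Quaternion.star_mul_self, Quaternion.re_coe, Quaternion.normSq_eq_norm_mul_self, sq]

theorem re_trace_conjTranspose_mul_comm (A B : Matrix m n Quat) :
    (Bᴴ * A).trace.re = (Aᴴ * B).trace.re := by
  rw [← conjTranspose_conjTranspose A, ← conjTranspose_mul, trace_conjTranspose,
    Quaternion.re_star, conjTranspose_conjTranspose]

/-- Cauchy–Schwarz, obtained from the triangle inequality by polarization. -/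
theorem re_trace_conjTranspose_mul_le (A B : Matrix m n Quat) :
    (Aᴴ * B).trace.re ≤ ‖A‖ * ‖B‖ := by
  have expand : ‖A + B‖ ^ 2 = ‖A‖ ^ 2 + 2 * (Aᴴ * B).trace.re + ‖B‖ ^ 2 := by
    rw [← re_trace_conjTranspose_mul_self, conjTranspose_add, Matrix.add_mul, Matrix.mul_add,
      Matrix.mul_add]
    simp only [trace_add, Quaternion.re_add, re_trace_conjTranspose_mul_self,
      re_trace_conjTranspose_mul_comm A B]
    ring
  nlinarith [norm_add_le A B, norm_nonneg (A + B), norm_nonneg A, norm_nonneg B]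

theorem norm_mul_of_conjTranspose_mul_self_eq_one [DecidableEq m] {U : Matrix l m Quat}
    (hU : Uᴴ * U = 1) (B : Matrix m n Quat) : ‖U * B‖ = ‖B‖ := by
  refine (sq_eq_sq₀ (norm_nonneg _) (norm_nonneg _)).mp ?_
  rw [← re_trace_conjTranspose_mul_self, ← re_trace_conjTranspose_mul_self, conjTranspose_mul,
    Matrix.mul_assoc, ← Matrix.mul_assoc Uᴴ, hU, Matrix.one_mul]

theorem norm_mul_conjTranspose_of_conjTranspose_mul_self_eq_one [DecidableEq n]
    {V : Matrix l n Quat} (hV : Vᴴ * V = 1) (B : Matrix m n Quat) : ‖B * Vᴴ‖ = ‖B‖ := by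
  rw [← frobenius_norm_conjTranspose, conjTranspose_mul, conjTranspose_conjTranspose,
    norm_mul_of_conjTranspose_mul_self_eq_one hV, frobenius_norm_conjTranspose]

theorem norm_le_of_tikhonov_mul_eq [DecidableEq m] {γ β : ℝ} (hγ : 0 ≤ γ) (hβ : 0 < β)
    {A : Matrix l m Quat} {v w : Matrix m n Quat} (h : (γ • (Aᴴ * A) + β • 1) * v = w) :
    ‖v‖ ≤ ‖w‖ / β := by
  have energy : γ * ‖A * v‖ ^ 2 + β * ‖v‖ ^ 2 = (vᴴ * w).trace.re := by
    rw [← h, Matrix.add_mul, Matrix.mul_add, smul_mul, smul_mul, Matrix.one_mul, Matrix.mul_smul,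
      Matrix.mul_smul, trace_add, trace_smul, trace_smul, Quaternion.re_add, Quaternion.re_smul,
      Quaternion.re_smul, ← re_trace_conjTranspose_mul_self, ← re_trace_conjTranspose_mul_self,
      conjTranspose_mul, Matrix.mul_assoc, Matrix.mul_assoc, smul_eq_mul, smul_eq_mul]
  rw [le_div_iff₀ hβ]
  rcases (norm_nonneg v).eq_or_lt with hv | hv
  · rw [← hv, zero_mul]; exact norm_nonneg w
  · have := re_trace_conjTranspose_mul_le v w
    nlinarith [mul_nonneg hγ (sq_nonneg ‖A * v‖)]

end QuaternionMatrix

section TikhonovStep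

variable {l m n : Type*} [Fintype l] [Fintype m] [Fintype n] [DecidableEq m]
  {γ β : ℝ} {A : Matrix l m Quat} {Y : Matrix l n Quat} {x z e : Matrix m n Quat}

theorem norm_le_of_tikhonov_step (hγ : 0 ≤ γ) (hβ : 0 < β)
    (h : (γ • (Aᴴ * A) + β • 1) * x = γ • (Aᴴ * Y) + β • z - e) :
    ‖x‖ ≤ ‖z‖ + (γ * ‖Aᴴ * Y‖ + ‖e‖) * β⁻¹ := by
  calc ‖x‖ ≤ ‖γ • (Aᴴ * Y) + β • z - e‖ / β := norm_le_of_tikhonov_mul_eq hγ hβ h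
    _ ≤ (γ * ‖Aᴴ * Y‖ + β * ‖z‖ + ‖e‖) / β := by
        gcongr
        refine (norm_sub_le _ _).trans (add_le_add_left ((norm_add_le _ _).trans_eq ?_) _)
        rw [norm_smul, norm_smul, Real.norm_of_nonneg hγ, Real.norm_of_nonneg hβ.le]
    _ = ‖z‖ + (γ * ‖Aᴴ * Y‖ + ‖e‖) * β⁻¹ := by field_simp; ring

theorem norm_sub_le_of_tikhonov_step (hγ : 0 ≤ γ) (hβ : 0 < β)
    (h : (γ • (Aᴴ * A) + β • 1) * x = γ • (Aᴴ * Y) + β • z - e) :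
    ‖x - z‖ ≤ (γ * ‖Aᴴ * Y‖ + ‖e‖ + γ * ‖Aᴴ * A‖ * ‖z‖) * β⁻¹ := by
  have shifted : (γ • (Aᴴ * A) + β • 1) * (x - z) = γ • (Aᴴ * Y) - e - γ • (Aᴴ * A * z) := by
    rw [Matrix.mul_sub, h, Matrix.add_mul, smul_mul, smul_mul, Matrix.one_mul]
    abel
  calc ‖x - z‖ ≤ ‖γ • (Aᴴ * Y) - e - γ • (Aᴴ * A * z)‖ / β :=
        norm_le_of_tikhonov_mul_eq hγ hβ shifted
    _ ≤ (γ * ‖Aᴴ * Y‖ + ‖e‖ + γ * ‖Aᴴ * A‖ * ‖z‖) / β := by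
        gcongr
        refine (norm_sub_le _ _).trans (add_le_add ((norm_sub_le _ _).trans_eq ?_) ?_)
        · rw [norm_smul, Real.norm_of_nonneg hγ]
        · rw [norm_smul, Real.norm_of_nonneg hγ, mul_assoc]
          exact mul_le_mul_of_nonneg_left (frobenius_norm_mul_le _ _) hγ
    _ = _ := div_eq_mul_inv _ _

end TikhonovStep

theorem Dmat_sub {m n : ℕ} (s t : Fin (min m n) → ℝ) : Dmat s - Dmat t = Dmat (s - t) := by
  ext i j : 1
  simp only [Dmat, Matrix.sub_apply, Pi.sub_apply]
  split_ifs <;> simp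

theorem norm_Dmat_le {m n : ℕ} {s : Fin (min m n) → ℝ} {b : ℝ} (hb : 0 ≤ b)
    (h : ∀ i, |s i| ≤ b) :
    ‖(Dmat s : Matrix (Fin m) (Fin n) Quat)‖ ≤ √(m * n) * b := by
  simpa only [Fintype.card_fin] using
    frobenius_norm_le_of_forall_norm_le (A := Dmat s) hb fun i j => by
    unfold Dmat
    split_ifs
    · simpa only [Quaternion.norm_coe, Real.norm_eq_abs] using h _
    · simpa using hb

theorem abs_sub_shrink_branch_le {K lam σ : ℝ} (hK : 1 < K) (hlam : 0 < lam) (hσ : 0 ≤ σ) :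
    |σ - (if K * lam / (2 * (K - 1)) < σ then σ else if lam < σ then K * (σ - lam / 2) else 0)|
      ≤ lam := by
  split_ifs with hlarge hmid
  · simpa using hlam.le
  · have hσK : σ * (2 * (K - 1)) ≤ K * lam := (le_div_iff₀ (by linarith)).mp (not_lt.mp hlarge)
    rw [abs_le]
    constructor <;> nlinarith
  · rw [sub_zero, abs_of_nonneg hσ]
    exact not_lt.mp hmid

theorem abs_sub_Sshrink_le {M : ℕ} {lam alph : ℝ} (hlam : 0 < lam) (halph : 0 < alph)
    {σ : Fin M → ℝ} {i : Fin M} (hσ : 0 ≤ σ i) : |σ i - Sshrink lam alph σ i| ≤ lam := by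
  unfold Sshrink
  dsimp only
  split_ifs with hz
  · rw [show σ i - (fun _ => (0 : ℝ)) i = σ i from sub_zero _, abs_of_nonneg hσ]
    by_contra! hi
    rw [Real.sqrt_eq_zero', ← not_lt] at hz
    refine hz (lt_of_lt_of_le ?_ (Finset.single_le_sum (fun j _ => sq_nonneg _)
      (Finset.mem_univ i)))
    rw [if_pos hi]
    nlinarith
  · refine abs_sub_shrink_branch_le ?_ hlam hσ
    have : 0 < √(∑ j, (if lam < σ j then σ j - lam / 2 else 0) ^ 2) :=
      (Real.sqrt_nonneg _).lt_of_ne' hz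
    have : 0 < alph * lam / (2 * √(∑ j, (if lam < σ j then σ j - lam / 2 else 0) ^ 2)) := by
      positivity
    linarith

theorem norm_multiplier_update_le {m n : ℕ} {lam alph β : ℝ} (hlam : 0 < lam) (halph : 0 < alph)
    (hβ : 0 < β) {U : Matrix (Fin m) (Fin m) Quat} {V : Matrix (Fin n) (Fin n) Quat}
    {σ : Fin (min m n) → ℝ} {x z e : Matrix (Fin m) (Fin n) Quat} (hU : IsQUnitary U)
    (hV : IsQUnitary V) (hσ : ∀ i, 0 ≤ σ i) (hx : x + β⁻¹ • e = U * Dmat σ * Vᴴ)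
    (hz : z = U * Dmat (Sshrink (lam / β) alph σ) * Vᴴ) :
    ‖e + β • (x - z)‖ ≤ √(m * n) * lam := by
  have hupdate :
      e + β • (x - z) = β • (U * (Dmat σ - Dmat (Sshrink (lam / β) alph σ)) * Vᴴ) := by
    rw [Matrix.mul_sub, Matrix.sub_mul, ← hx, ← hz, smul_sub, smul_sub, smul_add,
      smul_inv_smul₀ hβ.ne']
    abel
  have hshrink : ∀ i, |(σ - Sshrink (lam / β) alph σ) i| ≤ lam / β := fun i =>
    abs_sub_Sshrink_le (div_pos hlam hβ) halph (hσ i)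
  rw [hupdate, norm_smul, Real.norm_of_nonneg hβ.le,
    norm_mul_conjTranspose_of_conjTranspose_mul_self_eq_one hV.1,
    norm_mul_of_conjTranspose_mul_self_eq_one hU.1, Dmat_sub]
  calc β * ‖(Dmat (σ - Sshrink (lam / β) alph σ) : Matrix (Fin m) (Fin n) Quat)‖
      ≤ β * (√(m * n) * (lam / β)) := by
        gcongr; exact norm_Dmat_le (div_pos hlam hβ).le hshrink
    _ = √(m * n) * lam := by field_simp

theorem bddAbove_range_of_le_add_of_summable {u b : ℕ → ℝ} (hb : Summable b)
    (h : ∀ k, u (k + 1) ≤ u k + b k) : BddAbove (Set.range u) := by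
  obtain ⟨C, hC⟩ := hb.hasSum.tendsto_sum_nat.bddAbove_range
  have partial_sum (k : ℕ) : u k ≤ u 0 + ∑ i ∈ Finset.range k, b i := by
    induction k with
    | zero => simp
    | succ k ih => rw [Finset.sum_range_succ]; linarith [h k]
  refine ⟨u 0 + C, ?_⟩
  rintro _ ⟨k, rfl⟩
  linarith [partial_sum k, hC ⟨k, rfl⟩]

theorem tendsto_sub_succ_of_tendsto_interleaved {E : Type*} [TopologicalSpace E]
    [AddCommGroup E] [IsTopologicalAddGroup E] {x z : ℕ → E}
    (hsame : Tendsto (fun k => x (k + 1) - z (k + 1)) atTop (𝓝 0))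
    (hlag : Tendsto (fun k => x (k + 1) - z k) atTop (𝓝 0)) :
    Tendsto (fun k => x (k + 1) - x k) atTop (𝓝 0) ∧
      Tendsto (fun k => z (k + 1) - z k) atTop (𝓝 0) := by
  constructor
  · rw [← tendsto_add_atTop_iff_nat 1]
    have h := (hlag.comp (tendsto_add_atTop_nat 1)).sub hsame
    rw [sub_zero] at h
    exact h.congr fun k => by simp only [Function.comp_apply]; abel
  · have h := hlag.sub hsame
    rw [sub_zero] at h
    exact h.congr fun k => by abel

theorem tendsto_residuals_of_summable {E : Type*} [SeminormedAddCommGroup E] {x z : ℕ → E}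
    {ε : ℕ → ℝ} {a b c : ℝ} (hε0 : ∀ k, 0 ≤ ε k) (hε : Summable ε) (hc : 0 ≤ c)
    (hsame : ∀ k, ‖x (k + 1) - z (k + 1)‖ ≤ a * ε k)
    (hgrowth : ∀ k, ‖x (k + 1)‖ ≤ ‖z k‖ + b * ε k)
    (hlag : ∀ k, ‖x (k + 1) - z k‖ ≤ (b + c * ‖z k‖) * ε k) :
    Tendsto (fun k => x (k + 1) - z (k + 1)) atTop (𝓝 0) ∧
      Tendsto (fun k => x (k + 1) - x k) atTop (𝓝 0) ∧
      Tendsto (fun k => z (k + 1) - z k) atTop (𝓝 0) := by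
  obtain ⟨C, hC⟩ : BddAbove (Set.range fun k => ‖z k‖) :=
    bddAbove_range_of_le_add_of_summable (hε.mul_left (a + b)) fun k => by
      linarith [norm_le_norm_add_norm_sub' (z (k + 1)) (x (k + 1)),
        norm_sub_rev (z (k + 1)) (x (k + 1)), hsame k, hgrowth k]
  have hε_lim := hε.tendsto_atTop_zero
  have hsame_lim : Tendsto (fun k => x (k + 1) - z (k + 1)) atTop (𝓝 0) :=
    squeeze_zero_norm hsame (by simpa using hε_lim.const_mul a)
  have hlag_lim : Tendsto (fun k => x (k + 1) - z k) atTop (𝓝 0) := by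
    refine squeeze_zero_norm (fun k => (hlag k).trans ?_)
      (by simpa using hε_lim.const_mul (b + c * C))
    gcongr
    · exact hε0 k
    · exact hC ⟨k, rfl⟩
  exact ⟨hsame_lim, tendsto_sub_succ_of_tendsto_interleaved hsame_lim hlag_lim⟩

theorem qnmf_admm_linear_inverse_convergence (m n : ℕ)
    (A : Matrix (Fin m) (Fin m) Quat) (Y : Matrix (Fin m) (Fin n) Quat)
    (gam lam alph bet0 mu : ℝ)
    (hgam : 0 < gam) (hlam : 0 < lam) (halph : 0 < alph)
    (hbet0 : 0 < bet0) (hmu : 1 < mu)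
    (bet : ℕ → ℝ) (hbet : ∀ k, bet k = mu ^ k * bet0)
    (X Z η : ℕ → Matrix (Fin m) (Fin n) Quat)
    (hX : ∀ k, (gam • (Aᴴ * A) + bet k • (1 : Matrix (Fin m) (Fin m) Quat)) * X (k + 1)
        = gam • (Aᴴ * Y) + bet k • Z k - η k)
    (hZ : ∀ k, ∃ (U : Matrix (Fin m) (Fin m) Quat) (V : Matrix (Fin n) (Fin n) Quat)
        (σ : Fin (min m n) → ℝ),
        IsQUnitary U ∧ IsQUnitary V ∧ Antitone σ ∧ (∀ i, 0 ≤ σ i) ∧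
        X (k + 1) + (bet k)⁻¹ • η k = U * Dmat σ * Vᴴ ∧
        Z (k + 1) = U * Dmat (Sshrink (lam / bet k) alph σ) * Vᴴ)
    (hη : ∀ k, η (k + 1) = η k + bet k • (X (k + 1) - Z (k + 1))) :
    Tendsto (fun k => frob (X (k + 1) - Z (k + 1))) atTop (nhds 0) ∧
    Tendsto (fun k => frob (X (k + 1) - X k)) atTop (nhds 0) ∧
    Tendsto (fun k => frob (Z (k + 1) - Z k)) atTop (nhds 0) := by
  have hβ (k : ℕ) : 0 < bet k := by rw [hbet]; exact mul_pos (pow_pos (by linarith) k) hbet0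
  have hε0 (k : ℕ) : 0 ≤ (bet k)⁻¹ := inv_nonneg.2 (hβ k).le
  have hε : Summable fun k => (bet k)⁻¹ := by
    simp_rw [hbet, mul_inv, ← inv_pow]
    exact (summable_geometric_of_lt_one (by positivity) (inv_lt_one_of_one_lt₀ hmu)).mul_right _
  set Cη := max ‖η 0‖ (√(m * n) * lam)
  have hηC : ∀ k, ‖η k‖ ≤ Cη := by
    rintro (_ | k)
    · exact le_max_left _ _
    · obtain ⟨U, V, σ, hU, hV, -, hσ, hXσ, hZσ⟩ := hZ k
      rw [hη]
      exact (norm_multiplier_update_le hlam halph (hβ k) hU hV hσ hXσ hZσ).trans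
        (le_max_right _ _)
  have hsame (k : ℕ) : ‖X (k + 1) - Z (k + 1)‖ ≤ (2 * Cη) * (bet k)⁻¹ := by
    rw [show X (k + 1) - Z (k + 1) = (bet k)⁻¹ • (η (k + 1) - η k) by
      rw [hη, add_sub_cancel_left, inv_smul_smul₀ (hβ k).ne'], norm_smul,
      Real.norm_of_nonneg (hε0 k), mul_comm]
    exact mul_le_mul_of_nonneg_right
      (by linarith [norm_sub_le (η (k + 1)) (η k), hηC k, hηC (k + 1)]) (hε0 k)
  have hgrowth (k : ℕ) : ‖X (k + 1)‖ ≤ ‖Z k‖ + (gam * ‖Aᴴ * Y‖ + Cη) * (bet k)⁻¹ :=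
    (norm_le_of_tikhonov_step hgam.le (hβ k) (hX k)).trans
      (by have := hε0 k; gcongr; exact hηC k)
  have hlag (k : ℕ) : ‖X (k + 1) - Z k‖
      ≤ (gam * ‖Aᴴ * Y‖ + Cη + gam * ‖Aᴴ * A‖ * ‖Z k‖) * (bet k)⁻¹ :=
    (norm_sub_le_of_tikhonov_step hgam.le (hβ k) (hX k)).trans
      (by have := hε0 k; gcongr; exact hηC k)
  obtain ⟨hXZ, hXX, hZZ⟩ :=
    tendsto_residuals_of_summable hε0 hε (by positivity) hsame hgrowth hlag
  simp only [frob_eq_norm]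
  exact ⟨tendsto_zero_iff_norm_tendsto_zero.1 hXZ, tendsto_zero_iff_norm_tendsto_zero.1 hXX,
    tendsto_zero_iff_norm_tendsto_zero.1 hZZ⟩
end
end

section
/- Quaternion soft-thresholding solves the modulus-regularized proximal problem: let y ∈ ℍ, ρ > 0 and β > 0. Define q* = (y/|y|)·max(|y| − ρ/β, 0) if y ≠ 0 and q* = 0 if y = 0. Then for every quaternion q ∈ ℍ, ρ·|q| + (β/2)·|q − y|² ≥ ρ·|q*| + (β/2)·|q* − y|². -/
open Matrix BigOperators Filter

noncomputable section

/-! By the reverse triangle inequality `|‖q‖ - ‖y‖| ≤ ‖q - y‖`, the objective at `q` is at least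
its value at the point of the ray through `y` with norm `‖q‖`. This reduces the problem to minimising
`ρ t + β/2 (t - ‖y‖)²` over `t ≥ 0`, whose minimiser is `max (‖y‖ - ρ/β) 0`. -/

section SoftThreshold

open Set

variable {E : Type*} [NormedAddCommGroup E] [NormedSpace ℝ E]

theorem norm_div_norm_smul_self {y : E} (hy : y ≠ 0) (c : ℝ) : ‖(c / ‖y‖) • y‖ = |c| := by
  rw [norm_smul, Real.norm_eq_abs, abs_div, abs_norm, div_mul_cancel₀ _ (norm_ne_zero_iff.2 hy)]

theorem norm_div_norm_smul_self_sub {y : E} (hy : y ≠ 0) (c : ℝ) :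
    ‖(c / ‖y‖) • y - y‖ = |c - ‖y‖| := by
  rw [← norm_div_norm_smul_self hy, sub_div, div_self (norm_ne_zero_iff.2 hy), sub_smul, one_smul]

theorem isMinOn_Ici_max_sub_div {ρ β a : ℝ} (hβ : 0 < β) :
    IsMinOn (fun t => ρ * t + β / 2 * (t - a) ^ 2) (Ici 0) (max (a - ρ / β) 0) := by
  refine isMinOn_iff.2 fun t (ht : 0 ≤ t) => ?_
  rcases le_total (a - ρ / β) 0 with h | h
  · rw [max_eq_right h]
    have : β * a ≤ ρ := by rw [sub_nonpos, le_div_iff₀ hβ] at h; linarith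
    nlinarith [mul_nonneg ht (sub_nonneg.2 this), mul_nonneg hβ.le (sq_nonneg t)]
  · rw [max_eq_left h]
    have : β * (ρ / β) = ρ := mul_div_cancel₀ ρ hβ.ne'
    nlinarith [sq_nonneg (t - a + ρ / β)]

theorem isMinOn_norm_add_sq_norm_sub {ρ β : ℝ} (hρ : 0 ≤ ρ) (hβ : 0 < β) (y : E) :
    IsMinOn (fun q => ρ * ‖q‖ + β / 2 * ‖q - y‖ ^ 2) univ
      ((max (‖y‖ - ρ / β) 0 / ‖y‖) • y) := by
  rw [isMinOn_univ_iff]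
  intro q
  rcases eq_or_ne y 0 with rfl | hy
  · simp only [smul_zero, norm_zero, sub_zero, mul_zero, zero_add, ne_eq, OfNat.ofNat_ne_zero,
      not_false_eq_true, zero_pow]
    positivity
  set m := max (‖y‖ - ρ / β) 0
  have hm : 0 ≤ m := le_max_right _ _
  have hdist : (‖q‖ - ‖y‖) ^ 2 ≤ ‖q - y‖ ^ 2 :=
    sq_le_sq.2 (by rw [abs_norm]; exact abs_norm_sub_norm_le q y)
  calc ρ * ‖(m / ‖y‖) • y‖ + β / 2 * ‖(m / ‖y‖) • y - y‖ ^ 2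
      = ρ * m + β / 2 * (m - ‖y‖) ^ 2 := by
        rw [norm_div_norm_smul_self hy, norm_div_norm_smul_self_sub hy, abs_of_nonneg hm, sq_abs]
    _ ≤ ρ * ‖q‖ + β / 2 * (‖q‖ - ‖y‖) ^ 2 :=
        isMinOn_Ici_max_sub_div hβ (mem_Ici.2 (norm_nonneg q))
    _ ≤ ρ * ‖q‖ + β / 2 * ‖q - y‖ ^ 2 := by gcongr

end SoftThreshold

open Classical in
theorem quaternion_soft_threshold_prox (y : Quat) (rho bet : ℝ)
    (hrho : 0 < rho) (hbet : 0 < bet) :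
    let qstar : Quat := if y = 0 then 0 else (max (‖y‖ - rho / bet) 0 / ‖y‖) • y
    ∀ q : Quat,
      rho * ‖qstar‖ + (bet / 2) * ‖qstar - y‖ ^ 2 ≤
      rho * ‖q‖ + (bet / 2) * ‖q - y‖ ^ 2 := by
  intro qstar
  have hqstar : qstar = (max (‖y‖ - rho / bet) 0 / ‖y‖) • y := by
    by_cases hy : y = 0 <;> simp [qstar, hy]
  rw [hqstar]
  exact isMinOn_univ_iff.1 (isMinOn_norm_add_sq_norm_sub hrho.le hbet y)
end
end

section
/- Closed-form minimizer of the quaternion quadratic subproblem: let A be an m×m quaternion matrix, Y, Z, η m×n quaternion matrices, and γ > 0, β > 0. If X₀ is an m×n quaternion matrix satisfying (γ·Aᴴ*A + β·I) * X₀ = γ·Aᴴ*Y + β·Z − η, then for every m×n quaternion matrix X one has (γ/2)·‖A*X − Y‖_F² + (β/2)·‖X − Z‖_F² + ⟨η, X − Z⟩ ≥ (γ/2)·‖A*X₀ − Y‖_F² + (β/2)·‖X₀ − Z‖_F² + ⟨η, X₀ − Z⟩, where ⟨P, Q⟩ = ∑_{i,j} Re(star(P_{ij}) * Q_{ij}).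 -/
open Matrix BigOperators Filter

noncomputable section

/-! Writing `X = X₀ + D`, the objective expands as
`f X = f X₀ + qinner G D + (gam/2) frob (A D)^2 + (bet/2) frob D^2` with
`G = gam Aᴴ (A X₀ - Y) + bet (X₀ - Z) + η`, because `qinner` is a real inner product for which
`Aᴴ` is the adjoint of `A`. The normal equation for `X₀` says exactly `G = 0`. -/

open scoped RealInnerProductSpace

lemma Quaternion.re_star_mul_eq_inner (p q : Quat) : (star p * q).re = ⟪p, q⟫ := by
  simp only [Quaternion.inner_def, Quaternion.re_mul, Quaternion.re_star, Quaternion.imI_star,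
    Quaternion.imJ_star, Quaternion.imK_star]
  ring

lemma Quaternion.inner_mul_right_eq_inner_star_mul (p b c : Quat) :
    ⟪p, b * c⟫ = ⟪star b * p, c⟫ := by
  rw [← Quaternion.re_star_mul_eq_inner, ← Quaternion.re_star_mul_eq_inner, star_mul, star_star,
    mul_assoc]

section qinner

variable {m n : ℕ}

lemma qinner_eq_sum_inner (P Q : Matrix (Fin m) (Fin n) Quat) :
    qinner P Q = ∑ i, ∑ j, ⟪P i j, Q i j⟫ := by
  simp only [qinner, Quaternion.re_star_mul_eq_inner]

lemma frob_sq_eq_qinner_self (P : Matrix (Fin m) (Fin n) Quat) : frob P ^ 2 = qinner P P := by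
  rw [frob, Real.sq_sqrt (by positivity), qinner_eq_sum_inner]
  simp only [real_inner_self_eq_norm_sq]

lemma qinner_comm (P Q : Matrix (Fin m) (Fin n) Quat) : qinner P Q = qinner Q P := by
  simp only [qinner_eq_sum_inner, real_inner_comm]

lemma qinner_add_left (P Q R : Matrix (Fin m) (Fin n) Quat) :
    qinner (P + Q) R = qinner P R + qinner Q R := by
  simp only [qinner_eq_sum_inner, Matrix.add_apply, inner_add_left, Finset.sum_add_distrib]

lemma qinner_add_right (P Q R : Matrix (Fin m) (Fin n) Quat) :
    qinner P (Q + R) = qinner P Q + qinner P R := by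
  rw [qinner_comm, qinner_add_left, qinner_comm Q, qinner_comm R]

lemma qinner_smul_left (c : ℝ) (P Q : Matrix (Fin m) (Fin n) Quat) :
    qinner (c • P) Q = c * qinner P Q := by
  simp only [qinner_eq_sum_inner, Matrix.smul_apply, real_inner_smul_left, Finset.mul_sum]

lemma qinner_mul_right_eq_conjTranspose_mul_left {k : ℕ} (P : Matrix (Fin k) (Fin n) Quat)
    (A : Matrix (Fin k) (Fin m) Quat) (D : Matrix (Fin m) (Fin n) Quat) :
    qinner P (A * D) = qinner (Aᴴ * P) D := by
  simp only [qinner_eq_sum_inner, Matrix.mul_apply, Matrix.conjTranspose_apply, inner_sum,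
    sum_inner, Quaternion.inner_mul_right_eq_inner_star_mul]
  rw [Finset.sum_comm_cycle]
  exact Finset.sum_congr rfl fun _ _ => Finset.sum_comm

lemma frob_add_sq (P Q : Matrix (Fin m) (Fin n) Quat) :
    frob (P + Q) ^ 2 = frob P ^ 2 + 2 * qinner P Q + frob Q ^ 2 := by
  rw [frob_sq_eq_qinner_self, frob_sq_eq_qinner_self, frob_sq_eq_qinner_self, qinner_add_left,
    qinner_add_right, qinner_add_right, qinner_comm Q P]
  ring

end qinner

theorem quaternion_quadratic_subproblem_min (m n : ℕ)
    (A : Matrix (Fin m) (Fin m) Quat)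
    (Y Z η : Matrix (Fin m) (Fin n) Quat)
    (gam bet : ℝ) (hgam : 0 < gam) (hbet : 0 < bet)
    (X₀ : Matrix (Fin m) (Fin n) Quat)
    (hX₀ : (gam • (Aᴴ * A) + bet • (1 : Matrix (Fin m) (Fin m) Quat)) * X₀
        = gam • (Aᴴ * Y) + bet • Z - η) :
    ∀ X : Matrix (Fin m) (Fin n) Quat,
      (gam / 2) * frob (A * X₀ - Y) ^ 2 + (bet / 2) * frob (X₀ - Z) ^ 2 +
        qinner η (X₀ - Z) ≤
      (gam / 2) * frob (A * X - Y) ^ 2 + (bet / 2) * frob (X - Z) ^ 2 +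
        qinner η (X - Z) := by
  intro X
  obtain ⟨D, rfl⟩ : ∃ D, X = X₀ + D := ⟨X - X₀, by abel⟩
  have hgrad : gam • (Aᴴ * (A * X₀ - Y)) + bet • (X₀ - Z) + η = 0 := by
    rw [Matrix.add_mul, Matrix.smul_mul, Matrix.smul_mul, Matrix.one_mul, Matrix.mul_assoc] at hX₀
    rw [Matrix.mul_sub, smul_sub, smul_sub]
    linear_combination (norm := module) hX₀
  have hcross : gam * qinner (A * X₀ - Y) (A * D) + bet * qinner (X₀ - Z) D + qinner η D = 0 := by
    rw [qinner_mul_right_eq_conjTranspose_mul_left, ← qinner_smul_left, ← qinner_smul_left,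
      ← qinner_add_left, ← qinner_add_left, hgrad]
    simp only [qinner_eq_sum_inner, Matrix.zero_apply, inner_zero_left, Finset.sum_const_zero]
  rw [show A * (X₀ + D) - Y = (A * X₀ - Y) + A * D by rw [Matrix.mul_add]; abel,
    show X₀ + D - Z = (X₀ - Z) + D by abel, frob_add_sq, frob_add_sq, qinner_add_right]
  nlinarith [sq_nonneg (frob (A * D)), sq_nonneg (frob D)]
end
end
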